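/- Suppose $H = (V_1 \cup V_2 \cup V_3, E)$ is a tripartite $3$-uniform hypergraph, $0 < \epsilon < 1/100$, and suppose that at least $(1 - 3\epsilon^{1/2})|V_1||V_2|$ pairs $(x,y) \in V_1 \times V_2$ satisfy $|N_H(xy)|/|V_3| \in [0,\epsilon) \cup (1-\epsilon,1]$, and similarly for the pairs from $V_1 \times V_3$ and $V_2 \times V_3$. Then there exists a set $V_1' \subseteq V_1$ with $|V_1'| \geq (1 - 2\epsilon^{1/2})|V_1|$ such that for every $x \in V_1'$, either $|N_H(x)| \geq (1 - 2\epsilon^{1/4})|V_2||V_3|$ or $|N_H(x)| \leq 2\epsilon^{1/4}|V_2||V_3|$, where $N_H(x) = \{(y,z) \in V_2 \times V_3 : xyz \in E\}$. -/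

import Mathlib

open scoped Classical
open Finset

/-!
Fix `x ∈ V₁` and read its link as a relation between `V₂` and `V₃`. For a typical `x`, the
hypotheses on `V₁ × V₂` and `V₁ × V₃` say that almost every row and almost every column of this
relation is nearly empty or nearly full. Nearly full rows and nearly empty columns cannot both be
numerous (count the edges between them), so the link itself is nearly empty or nearly full, up to
an error whose average over `x` is `O(√ε)`.

Let `D` (resp. `S`) be the pairs `(y, z)` lying in more than a `(1 - ε)`-fraction (resp. less than
an `ε`-fraction) of the links; by the hypothesis on `V₂ × V₃` they cover almost all of `V₂ × V₃`.
Every link nearly contains `D` and nearly avoids `S`, so averaging the bound above shows that one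
of `D`, `S` has density `O(√ε)` and the other density `1 - O(√ε)`. If `S` is the large one, a
vertex whose link has density above `2ε^{1/4}` has many pairs of `S` in its link, while on average
a link meets `S` in an `ε`-fraction, and Markov's inequality leaves at most `2√ε |V₁|` such
vertices. A large `D` is the same case for the complementary hypergraph.
-/

section

variable {β γ κ : Type*}

/- The nearly full and the nearly empty rows of the `A × B` incidence matrix of `Q`; the columns
are the rows of `fun b a => Q a b`. -/
noncomputable def denseRows (ε : ℝ) (A : Finset β) (B : Finset γ) (Q : β → γ → Prop)
    [∀ a, DecidablePred (Q a)] : Finset β :=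
  {a ∈ A | (1 - ε) * #B < (#{b ∈ B | Q a b} : ℝ)}

noncomputable def sparseRows (ε : ℝ) (A : Finset β) (B : Finset γ) (Q : β → γ → Prop)
    [∀ a, DecidablePred (Q a)] : Finset β :=
  {a ∈ A | (#{b ∈ B | Q a b} : ℝ) < ε * #B}

theorem cast_card_filter_not (s : Finset β) (p : β → Prop) [DecidablePred p] :
    (#{x ∈ s | ¬p x} : ℝ) = #s - #{x ∈ s | p x} := by
  rw [← card_filter_add_card_filter_not (s := s) p]
  push_cast
  ring

theorem card_filter_add_card_le_of_subset {S T : Finset β} (h : S ⊆ T) (p : β → Prop)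
    [DecidablePred p] :
    #{x ∈ T | p x} + #S ≤ #{x ∈ S | p x} + #T := by
  have hsub : {x ∈ T | p x} ⊆ {x ∈ S | p x} ∪ (T \ S) := fun x hx => by
    by_cases hxS : x ∈ S <;> simp_all
  have := (card_le_card hsub).trans (card_union_le _ _)
  have := card_sdiff_add_card_eq_card h
  omega

theorem card_interedges_eq_sum (Q : β → γ → Prop) [∀ a, DecidablePred (Q a)] (A : Finset β)
    (B : Finset γ) :
    #(Rel.interedges Q A B) = ∑ a ∈ A, #{b ∈ B | Q a b} := by
  rw [Rel.interedges, card_filter, sum_product]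
  simp only [card_filter]

theorem card_interedges_swap (Q : β → γ → Prop) [∀ a, DecidablePred (Q a)] (A : Finset β)
    (B : Finset γ) :
    #(Rel.interedges (fun b a => Q a b) B A) = #(Rel.interedges Q A B) := by
  rw [card_interedges_eq_sum, card_interedges_eq_sum]
  exact (sum_card_bipartiteAbove_eq_sum_card_bipartiteBelow Q).symm

section Rows

variable (ε : ℝ) (A : Finset β) (B : Finset γ) (Q : β → γ → Prop) [∀ a, DecidablePred (Q a)]

theorem sparseRows_not : sparseRows ε A B (fun a b => ¬Q a b) = denseRows ε A B Q := by
  refine filter_congr fun a _ => ?_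
  simp only [cast_card_filter_not]
  constructor <;> intro h <;> linarith

theorem denseRows_not : denseRows ε A B (fun a b => ¬Q a b) = sparseRows ε A B Q := by
  refine filter_congr fun a _ => ?_
  simp only [cast_card_filter_not]
  constructor <;> intro h <;> linarith

theorem card_denseRows_add_card_sparseRows_le (hε : ε ≤ 1 / 2) :
    (#(denseRows ε A B Q) : ℝ) + #(sparseRows ε A B Q) ≤ #A := by
  have hdisj : Disjoint (denseRows ε A B Q) (sparseRows ε A B Q) := by
    refine disjoint_filter.2 fun a _ hd hs => ?_
    have : ε * #B ≤ (1 - ε) * #B := by gcongr; linarith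
    linarith
  exact_mod_cast (card_union_of_disjoint hdisj).symm.trans_le
    (card_le_card (union_subset (filter_subset _ _) (filter_subset _ _)))

theorem card_denseRows_mul_le :
    (#(denseRows ε A B Q) : ℝ) * ((1 - ε) * #B) ≤ #(Rel.interedges Q A B) := by
  rw [card_interedges_eq_sum, ← nsmul_eq_mul]
  push_cast
  calc #(denseRows ε A B Q) • ((1 - ε) * #B)
      ≤ ∑ a ∈ denseRows ε A B Q, (#{b ∈ B | Q a b} : ℝ) :=
        card_nsmul_le_sum _ _ _ fun a ha => (mem_filter.1 ha).2.le
    _ ≤ ∑ a ∈ A, (#{b ∈ B | Q a b} : ℝ) :=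
        sum_le_sum_of_subset_of_nonneg (filter_subset _ _) fun _ _ _ => by positivity

theorem card_sparseRows_mul_le :
    (#(sparseRows ε A B Q) : ℝ) * ((1 - ε) * #B) ≤ #A * #B - #(Rel.interedges Q A B) := by
  have h := card_denseRows_mul_le ε A B fun a b => ¬Q a b
  have hcompl : (#(Rel.interedges Q A B) : ℝ) + #(Rel.interedges (fun a b => ¬Q a b) A B) =
      #A * #B := by exact_mod_cast Rel.card_interedges_add_card_interedges_compl Q A B
  rw [denseRows_not] at h
  linarith

/-- Double counting the `Q`-pairs between the dense rows and the sparse columns. -/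
theorem card_denseRows_le_or_card_sparseRows_swap_le (hε : 0 ≤ ε) :
    (#(denseRows ε A B Q) : ℝ) ≤ 2 * ε * #A ∨
      (#(sparseRows ε B A fun b a => Q a b) : ℝ) ≤ 2 * ε * #B := by
  set D := denseRows ε A B Q
  set S := sparseRows ε B A (fun b a => Q a b)
  have hcount : #D • ((#S : ℝ) - ε * #B) ≤ #S • (ε * #A) := by
    refine card_nsmul_le_card_nsmul Q (fun a ha => ?_) fun b hb => ?_
    · have h := card_filter_add_card_le_of_subset (filter_subset _ B : S ⊆ B) (Q a)
      have hD := (mem_filter.1 ha).2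
      have h' : (#{b ∈ B | Q a b} : ℝ) + #S ≤ #(bipartiteAbove Q S a) + #B := by exact_mod_cast h
      linarith
    · have hA : #(bipartiteBelow Q D b) ≤ #{a ∈ A | Q a b} :=
        card_le_card (filter_subset_filter _ (filter_subset _ _))
      have hS := (mem_filter.1 hb).2
      have hA' : (#(bipartiteBelow Q D b) : ℝ) ≤ #{a ∈ A | Q a b} := by exact_mod_cast hA
      exact hA'.trans hS.le
  rw [nsmul_eq_mul, nsmul_eq_mul] at hcount
  by_contra! h
  nlinarith [mul_pos (sub_pos.2 h.1) (by linarith : (0 : ℝ) < #S - ε * #B),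
    mul_nonneg (mul_nonneg hε (Nat.cast_nonneg #A)) (by linarith : (0 : ℝ) ≤ #S - 2 * ε * #B)]

theorem min_card_interedges_le (hε : 0 ≤ ε) (hε' : ε ≤ 1 / 2)
    (h : (#(denseRows ε A B Q) : ℝ) ≤ 2 * ε * #A ∨ (#(sparseRows ε A B Q) : ℝ) ≤ 2 * ε * #A) :
    min (#(Rel.interedges Q A B) : ℝ) (#A * #B - #(Rel.interedges Q A B)) ≤
      (#A - #(denseRows ε A B Q) - #(sparseRows ε A B Q)) * #B + 3 * ε * (#A * #B) := by
  have hD := card_denseRows_mul_le ε A B Q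
  have hS := card_sparseRows_mul_le ε A B Q
  have hDS := card_denseRows_add_card_sparseRows_le ε A B Q hε'
  have hB : (0 : ℝ) ≤ #B := Nat.cast_nonneg _
  have hεB : 0 ≤ ε * #B := mul_nonneg hε hB
  have hDA : (#(denseRows ε A B Q) : ℝ) ≤ #A := by
    linarith [Nat.cast_nonneg (α := ℝ) #(sparseRows ε A B Q)]
  have hSA : (#(sparseRows ε A B Q) : ℝ) ≤ #A := by
    linarith [Nat.cast_nonneg (α := ℝ) #(denseRows ε A B Q)]
  rcases h with h | h
  · refine (min_le_left _ _).trans ?_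
    nlinarith [mul_le_mul_of_nonneg_right h hB, mul_le_mul_of_nonneg_right hSA hεB]
  · refine (min_le_right _ _).trans ?_
    nlinarith [mul_le_mul_of_nonneg_right h hB, mul_le_mul_of_nonneg_right hDA hεB]

theorem two_mul_min_card_interedges_le (hD : (#(denseRows ε A B Q) : ℝ) ≤ 2 * ε * #A)
    (hS : (#(sparseRows ε A B Q) : ℝ) ≤ 2 * ε * #A) :
    2 * min (#(Rel.interedges Q A B) : ℝ) (#A * #B - #(Rel.interedges Q A B)) ≤
      (#A - #(denseRows ε A B Q) - #(sparseRows ε A B Q)) * #B + 4 * ε * (#A * #B) := by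
  have h := min_le_left (#(Rel.interedges Q A B) : ℝ) (#A * #B - #(Rel.interedges Q A B))
  have h' := min_le_right (#(Rel.interedges Q A B) : ℝ) (#A * #B - #(Rel.interedges Q A B))
  nlinarith [mul_le_mul_of_nonneg_right (add_le_add hD hS) (Nat.cast_nonneg #B : (0 : ℝ) ≤ #B)]

theorem two_mul_min_card_interedges_le_of_rows_cols (hε : 0 ≤ ε) (hε' : ε ≤ 1 / 2) :
    2 * min (#(Rel.interedges Q A B) : ℝ) (#A * #B - #(Rel.interedges Q A B)) ≤
      (#A - #(denseRows ε A B Q) - #(sparseRows ε A B Q)) * #B +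
      (#B - #(denseRows ε B A fun b a => Q a b) - #(sparseRows ε B A fun b a => Q a b)) * #A +
      6 * ε * (#A * #B) := by
  have rows := min_card_interedges_le ε A B Q hε hε'
  have cols := min_card_interedges_le ε B A (fun b a => Q a b) hε hε'
  have rows₂ := two_mul_min_card_interedges_le ε A B Q
  have cols₂ := two_mul_min_card_interedges_le ε B A (fun b a => Q a b)
  rw [card_interedges_swap, mul_comm (#B : ℝ)] at cols cols₂
  have hA : 0 ≤ (#A - #(denseRows ε A B Q) - #(sparseRows ε A B Q) : ℝ) * #B :=
    mul_nonneg (by linarith [card_denseRows_add_card_sparseRows_le ε A B Q hε']) (Nat.cast_nonneg _)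
  have hB : 0 ≤ (#B - #(denseRows ε B A fun b a => Q a b) -
      #(sparseRows ε B A fun b a => Q a b) : ℝ) * #A :=
    mul_nonneg (by linarith [card_denseRows_add_card_sparseRows_le ε B A (fun b a => Q a b) hε'])
      (Nat.cast_nonneg _)
  have hεAB : 0 ≤ ε * (#A * #B) := by positivity
  rcases card_denseRows_le_or_card_sparseRows_swap_le ε A B Q hε with hD₂ | hS₃ <;>
  rcases card_denseRows_le_or_card_sparseRows_swap_le ε B A (fun b a => Q a b) hε with hD₃ | hS₂
  · linarith [rows (.inl hD₂), cols (.inl hD₃)]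
  · linarith [rows₂ hD₂ hS₂]
  · linarith [cols₂ hD₃ hS₃]
  · linarith [rows (.inr hS₂), cols (.inr hS₃)]

theorem card_filter_extreme_le (hB : B.Nonempty) :
    #{a ∈ A | (#{b ∈ B | Q a b} : ℝ) / #B < ε ∨ 1 - ε < (#{b ∈ B | Q a b} : ℝ) / #B} ≤
      #(denseRows ε A B Q) + #(sparseRows ε A B Q) := by
  have hB' : (0 : ℝ) < #B := by exact_mod_cast hB.card_pos
  refine (card_le_card fun a ha => ?_).trans (card_union_le _ _)
  simp only [mem_filter, mem_union, denseRows, sparseRows, div_lt_iff₀ hB', lt_div_iff₀ hB']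
    at ha ⊢
  tauto

end Rows

section Averaging

variable (ε : ℝ) (P : Finset γ) (V : Finset β) (R : γ → β → Prop) [∀ p, DecidablePred (R p)]

theorem sum_card_filter_sparseRows_le :
    ∑ x ∈ V, (#{p ∈ sparseRows ε P V R | R p x} : ℝ) ≤ ε * #V * #(sparseRows ε P V R) := by
  set S := sparseRows ε P V R
  have hswap : ∑ x ∈ V, #{p ∈ S | R p x} = ∑ p ∈ S, #{x ∈ V | R p x} :=
    sum_card_bipartiteAbove_eq_sum_card_bipartiteBelow fun x p => R p x
  calc ∑ x ∈ V, (#{p ∈ S | R p x} : ℝ) = ∑ p ∈ S, (#{x ∈ V | R p x} : ℝ) := by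
        exact_mod_cast hswap
    _ ≤ #S • (ε * #V) := sum_le_card_nsmul _ _ _ fun p hp => (mem_filter.1 hp).2.le
    _ = ε * #V * #S := by rw [nsmul_eq_mul]; ring

/-- Each link `{p ∈ P | R p x}` nearly contains the dense pairs and nearly avoids the sparse
ones. -/
theorem card_mul_min_card_denseRows_sparseRows_le (hε : 0 ≤ ε) (hε' : ε ≤ 1 / 2) :
    #V * min (#(denseRows ε P V R) : ℝ) #(sparseRows ε P V R) ≤
      ∑ x ∈ V, min (#{p ∈ P | R p x} : ℝ) (#P - #{p ∈ P | R p x}) + ε * #V * #P := by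
  set D := denseRows ε P V R
  set S := sparseRows ε P V R
  have hD := sum_card_filter_sparseRows_le ε P V fun p x => ¬R p x
  rw [sparseRows_not] at hD
  have hS := sum_card_filter_sparseRows_le ε P V R
  have hDS := card_denseRows_add_card_sparseRows_le ε P V R hε'
  have hlink : ∀ x ∈ V, min (#D : ℝ) #S ≤ min (#{p ∈ P | R p x} : ℝ) (#P - #{p ∈ P | R p x}) +
      (#{p ∈ D | ¬R p x} + #{p ∈ S | R p x}) := by
    intro x _
    have hD' := card_filter_add_card_le_of_subset (filter_subset _ P : D ⊆ P) fun p => ¬R p x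
    have hS' := card_filter_add_card_le_of_subset (filter_subset _ P : S ⊆ P) fun p => R p x
    have hD'' : (#{p ∈ P | ¬R p x} : ℝ) + #D ≤ #{p ∈ D | ¬R p x} + #P := by exact_mod_cast hD'
    have hS'' : (#{p ∈ P | R p x} : ℝ) + #S ≤ #{p ∈ S | R p x} + #P := by exact_mod_cast hS'
    rw [cast_card_filter_not] at hD''
    rw [← min_add_add_right]
    exact min_le_min (by linarith [(Nat.cast_nonneg _ : (0 : ℝ) ≤ #{p ∈ S | R p x})])
      (by linarith [(Nat.cast_nonneg _ : (0 : ℝ) ≤ #{p ∈ D | ¬R p x})])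
  calc #V * min (#D : ℝ) #S = ∑ _x ∈ V, min (#D : ℝ) #S := by rw [sum_const, nsmul_eq_mul]
    _ ≤ ∑ x ∈ V, (min (#{p ∈ P | R p x} : ℝ) (#P - #{p ∈ P | R p x}) +
          (#{p ∈ D | ¬R p x} + #{p ∈ S | R p x})) := sum_le_sum hlink
    _ ≤ _ := by
      rw [sum_add_distrib, sum_add_distrib]
      nlinarith [mul_nonneg hε (Nat.cast_nonneg #V : (0 : ℝ) ≤ #V)]

/-- Markov's inequality for the number of sparse pairs in the links `{p ∈ P | R p x}`. -/
theorem card_filter_lt_card_mul_le (hε : 0 ≤ ε) (hP : P.Nonempty) {δ t : ℝ}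
    (hS : (1 - δ) * #P ≤ #(sparseRows ε P V R)) :
    (#{x ∈ V | t * #P < #{p ∈ P | R p x}} : ℝ) * (t - δ) ≤ ε * #V := by
  set S := sparseRows ε P V R
  set X := {x ∈ V | t * #P < (#{p ∈ P | R p x} : ℝ)}
  have hcount : #X • ((t - δ) * #P) ≤ #S • (ε * #V) := by
    refine card_nsmul_le_card_nsmul (fun x p => R p x) (fun x hx => ?_) fun p hp => ?_
    · have h := card_filter_add_card_le_of_subset (filter_subset _ P : S ⊆ P) fun p => R p x
      have h' : (#{p ∈ P | R p x} : ℝ) + #S ≤ #(bipartiteAbove (fun x p => R p x) S x) + #P := by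
        exact_mod_cast h
      linarith [(mem_filter.1 hx).2]
    · have hV : #(bipartiteBelow (fun x p => R p x) X p) ≤ #{x ∈ V | R p x} :=
        card_le_card (filter_subset_filter _ (filter_subset _ _))
      have hV' : (#(bipartiteBelow (fun x p => R p x) X p) : ℝ) ≤ #{x ∈ V | R p x} := by
        exact_mod_cast hV
      exact hV'.trans (mem_filter.1 hp).2.le
  have hSP : (#S : ℝ) ≤ #P := by exact_mod_cast card_le_card (filter_subset _ P)
  have hP' : (0 : ℝ) < #P := by exact_mod_cast hP.card_pos
  rw [nsmul_eq_mul, nsmul_eq_mul] at hcount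
  refine le_of_mul_le_mul_right ?_ hP'
  nlinarith [mul_le_mul_of_nonneg_right hSP (mul_nonneg hε (Nat.cast_nonneg #V : (0 : ℝ) ≤ #V))]

theorem exists_subset_forall_card_filter_le (hε : 0 ≤ ε) (hP : P.Nonempty) {δ t c : ℝ}
    (hS : (1 - δ) * #P ≤ #(sparseRows ε P V R)) (hδt : δ < t) (hc : ε ≤ c * (t - δ)) :
    ∃ V' ⊆ V, (1 - c) * #V ≤ #V' ∧ ∀ x ∈ V', (#{p ∈ P | R p x} : ℝ) ≤ t * #P := by
  refine ⟨{x ∈ V | (#{p ∈ P | R p x} : ℝ) ≤ t * #P}, filter_subset _ _, ?_,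
    fun x hx => (mem_filter.1 hx).2⟩
  have hX := card_filter_lt_card_mul_le ε P V R hε hP (t := t) hS
  have hsplit := cast_card_filter_not V fun x => (#{p ∈ P | R p x} : ℝ) ≤ t * #P
  simp only [not_le] at hsplit
  have hX' : (#{x ∈ V | t * #P < #{p ∈ P | R p x}} : ℝ) ≤ c * #V :=
    le_of_mul_le_mul_right (by nlinarith) (sub_pos.2 hδt)
  linarith

theorem exists_subset_forall_card_filter_le_or_le (hε : 0 ≤ ε) (hP : P.Nonempty) {δ t c : ℝ}
    (hbig : (1 - δ) * #P ≤ max (#(denseRows ε P V R) : ℝ) #(sparseRows ε P V R))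
    (hδt : δ < t) (hc : ε ≤ c * (t - δ)) :
    ∃ V' ⊆ V, (1 - c) * #V ≤ #V' ∧ ∀ x ∈ V',
      (1 - t) * #P ≤ #{p ∈ P | R p x} ∨ (#{p ∈ P | R p x} : ℝ) ≤ t * #P := by
  rcases le_max_iff.1 hbig with hD | hS
  · rw [← sparseRows_not] at hD
    obtain ⟨V', hV', hcard, hgood⟩ := exists_subset_forall_card_filter_le ε P V _ hε hP hD hδt hc
    refine ⟨V', hV', hcard, fun x hx => Or.inl ?_⟩
    have hx := hgood x hx
    rw [cast_card_filter_not] at hx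
    linarith
  · obtain ⟨V', hV', hcard, hgood⟩ := exists_subset_forall_card_filter_le ε P V R hε hP hS hδt hc
    exact ⟨V', hV', hcard, fun x hx => Or.inr (hgood x hx)⟩

end Averaging

section Hypergraph

variable {ε : ℝ} {V1 : Finset β} {V2 : Finset γ} {V3 : Finset κ} (E : β → γ → κ → Prop)
  [∀ x y, DecidablePred (E x y)]

theorem card_filter_extreme_le_sum (hV3 : V3.Nonempty) :
    (#{p ∈ V1 ×ˢ V2 | (#{z ∈ V3 | E p.1 p.2 z} : ℝ) / #V3 < ε ∨
        1 - ε < (#{z ∈ V3 | E p.1 p.2 z} : ℝ) / #V3} : ℝ) ≤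
      ∑ x ∈ V1, ((#(denseRows ε V2 V3 (E x)) : ℝ) + #(sparseRows ε V2 V3 (E x))) := by
  have h := card_interedges_eq_sum (fun x y => (#{z ∈ V3 | E x y z} : ℝ) / #V3 < ε ∨
    1 - ε < (#{z ∈ V3 | E x y z} : ℝ) / #V3) V1 V2
  rw [Rel.interedges] at h
  rw [h]
  push_cast
  exact sum_le_sum fun x _ => by exact_mod_cast card_filter_extreme_le ε V2 V3 (E x) hV3

theorem min_card_denseRows_sparseRows_le (hε : 0 ≤ ε) (hε' : ε ≤ 1 / 2) (hV1 : V1.Nonempty)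
    {c : ℝ}
    (h12 : (1 - c) * (#V1 * #V2) ≤
      ∑ x ∈ V1, ((#(denseRows ε V2 V3 (E x)) : ℝ) + #(sparseRows ε V2 V3 (E x))))
    (h13 : (1 - c) * (#V1 * #V3) ≤ ∑ x ∈ V1,
      ((#(denseRows ε V3 V2 fun z y => E x y z) : ℝ) + #(sparseRows ε V3 V2 fun z y => E x y z))) :
    min (#(denseRows ε (V2 ×ˢ V3) V1 fun p x => E x p.1 p.2) : ℝ)
        #(sparseRows ε (V2 ×ˢ V3) V1 fun p x => E x p.1 p.2) ≤
      (c + 4 * ε) * (#V2 * #V3) := by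
  have hP : (#(V2 ×ˢ V3) : ℝ) = #V2 * #V3 := by rw [card_product, Nat.cast_mul]
  have havg := card_mul_min_card_denseRows_sparseRows_le ε (V2 ×ˢ V3) V1
    (fun p x => E x p.1 p.2) hε hε'
  rw [hP] at havg
  have hlink : ∀ x ∈ V1, 2 * min (#{p ∈ V2 ×ˢ V3 | E x p.1 p.2} : ℝ)
      (#V2 * #V3 - #{p ∈ V2 ×ˢ V3 | E x p.1 p.2}) ≤
      (#V2 - #(denseRows ε V2 V3 (E x)) - #(sparseRows ε V2 V3 (E x))) * #V3 +
      (#V3 - #(denseRows ε V3 V2 fun z y => E x y z) -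
        #(sparseRows ε V3 V2 fun z y => E x y z)) * #V2 + 6 * ε * (#V2 * #V3) :=
    fun x _ => two_mul_min_card_interedges_le_of_rows_cols ε V2 V3 (E x) hε hε'
  have hsum := sum_le_sum hlink
  rw [← mul_sum] at hsum
  simp only [sum_add_distrib, sum_sub_distrib, ← sum_mul, sum_const, nsmul_eq_mul] at hsum h12 h13
  have hV1' : (0 : ℝ) < #V1 := by exact_mod_cast hV1.card_pos
  refine le_of_mul_le_mul_left ?_ hV1'
  nlinarith [mul_le_mul_of_nonneg_right h12 (Nat.cast_nonneg #V3 : (0 : ℝ) ≤ #V3),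
    mul_le_mul_of_nonneg_right h13 (Nat.cast_nonneg #V2 : (0 : ℝ) ≤ #V2)]

end Hypergraph

/-- With `q = ε^{1/4}` and `δ = 6√ε + 4ε`: `δ < 2q` and `ε ≤ 2√ε (2q - δ)`. -/
theorem quarter_pow_bounds {q : ℝ} (hq0 : 0 < q) (hq : q < 1 / 4) :
    6 * q ^ 2 + 4 * q ^ 4 < 2 * q ∧ q ^ 4 ≤ 2 * q ^ 2 * (2 * q - (6 * q ^ 2 + 4 * q ^ 4)) := by
  have hq2 : q ^ 2 < q / 4 := by nlinarith
  have hq3 : q ^ 3 < q ^ 2 / 4 := by nlinarith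
  have hq4 : q ^ 4 < q ^ 3 / 4 := by nlinarith
  have hq6 : q ^ 6 < q ^ 3 / 64 := by nlinarith [pow_pos hq0 3]
  constructor <;> nlinarith

end

theorem stmt_7_general {α : Type*} (ε : ℝ) (hε0 : 0 < ε)
    (V1 V2 V3 : Finset α)
    (E : α → α → α → Prop)
    (hyp12 : (1 - 3 * Real.sqrt ε) * ((V1.card : ℝ) * (V2.card : ℝ)) ≤
      (((V1 ×ˢ V2).filter fun p =>
        ((V3.filter fun z => E p.1 p.2 z).card : ℝ) / (V3.card : ℝ) < ε ∨
        1 - ε < ((V3.filter fun z => E p.1 p.2 z).card : ℝ) / (V3.card : ℝ)).card : ℝ))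
    (hyp13 : (1 - 3 * Real.sqrt ε) * ((V1.card : ℝ) * (V3.card : ℝ)) ≤
      (((V1 ×ˢ V3).filter fun p =>
        ((V2.filter fun y => E p.1 y p.2).card : ℝ) / (V2.card : ℝ) < ε ∨
        1 - ε < ((V2.filter fun y => E p.1 y p.2).card : ℝ) / (V2.card : ℝ)).card : ℝ))
    (hyp23 : (1 - 3 * Real.sqrt ε) * ((V2.card : ℝ) * (V3.card : ℝ)) ≤
      (((V2 ×ˢ V3).filter fun p =>
        ((V1.filter fun x => E x p.1 p.2).card : ℝ) / (V1.card : ℝ) < ε ∨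
        1 - ε < ((V1.filter fun x => E x p.1 p.2).card : ℝ) / (V1.card : ℝ)).card : ℝ)) :
    ∃ V1' ⊆ V1, (1 - 2 * Real.sqrt ε) * (V1.card : ℝ) ≤ (V1'.card : ℝ) ∧
      ∀ x ∈ V1',
        (1 - 2 * ε ^ ((1:ℝ)/4)) * ((V2.card : ℝ) * (V3.card : ℝ)) ≤
            (((V2 ×ˢ V3).filter fun p => E x p.1 p.2).card : ℝ) ∨
        (((V2 ×ˢ V3).filter fun p => E x p.1 p.2).card : ℝ) ≤
            2 * ε ^ ((1:ℝ)/4) * ((V2.card : ℝ) * (V3.card : ℝ)) := by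
  set q := ε ^ ((1 : ℝ) / 4) with hq_def
  have hq0 : 0 < q := by positivity
  have hε4 : ε = q ^ 4 := by
    rw [hq_def, one_div]
    exact_mod_cast (Real.rpow_inv_natCast_pow hε0.le (by norm_num : 4 ≠ 0)).symm
  clear_value q
  have hsq : √ε = q ^ 2 := by
    rw [hε4, show q ^ 4 = (q ^ 2) ^ 2 by ring, Real.sqrt_sq (by positivity)]
  rcases V1.eq_empty_or_nonempty with rfl | hV1
  · exact ⟨∅, subset_rfl, by rw [card_empty, Nat.cast_zero, mul_zero], by simp⟩
  have hM : (#(V2 ×ˢ V3) : ℝ) = #V2 * #V3 := by rw [card_product, Nat.cast_mul]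
  by_cases htriv : V2 ×ˢ V3 = ∅ ∨ 1 / 4 ≤ q
  · refine ⟨V1, subset_rfl, by nlinarith [Real.sqrt_nonneg ε], fun x _ => ?_⟩
    have hM0 : (0 : ℝ) ≤ #V2 * #V3 := hM ▸ Nat.cast_nonneg _
    rcases htriv with hP | hq
    · right
      rw [hP, filter_empty, card_empty, Nat.cast_zero]
      exact mul_nonneg (by linarith) hM0
    · exact (le_or_gt _ _).symm.imp (fun h => by nlinarith) id
  push Not at htriv
  obtain ⟨hP, hq⟩ := htriv
  obtain ⟨hV2, hV3⟩ := nonempty_product.1 hP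
  obtain ⟨hδ, hc⟩ := quarter_pow_bounds hq0 hq
  rw [← hsq, ← hε4] at hδ hc
  set D := denseRows ε (V2 ×ˢ V3) V1 fun p x => E x p.1 p.2
  set S := sparseRows ε (V2 ×ˢ V3) V1 fun p x => E x p.1 p.2
  have hmin : min (#D : ℝ) #S ≤ (3 * √ε + 4 * ε) * (#V2 * #V3) :=
    min_card_denseRows_sparseRows_le E hε0.le (by nlinarith) hV1
      (hyp12.trans (card_filter_extreme_le_sum E hV3))
      (hyp13.trans (card_filter_extreme_le_sum (fun x z y => E x y z) hV2))
  have hDS : (1 - 3 * √ε) * (#V2 * #V3) ≤ (#D : ℝ) + #S :=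
    hyp23.trans (by exact_mod_cast card_filter_extreme_le ε (V2 ×ˢ V3) V1 _ hV1)
  obtain ⟨V', hV', hcard, hgood⟩ := exists_subset_forall_card_filter_le_or_le ε (V2 ×ˢ V3) V1
    (fun p x => E x p.1 p.2) hε0.le hP (t := 2 * q)
    (by rw [hM]; linarith [min_add_max (#D : ℝ) #S]) hδ hc
  exact ⟨V', hV', hcard, fun x hx => hM ▸ hgood x hx⟩

/-- key claim in the proof of the Symmetry Lemma for 3-graphs:
if for each pair of parts, most pairs of vertices have pair-neighborhood
density in the third part close to 0 or 1, then there is `V₁' ⊆ V₁` with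
`|V₁'| ≥ (1-2√ε)|V₁|` such that every `x ∈ V₁'` has link of size
`≥ (1-2ε^(1/4))|V₂||V₃|` or `≤ 2ε^(1/4)|V₂||V₃|`. -/
theorem stmt_7 {α : Type*} [DecidableEq α] (ε : ℝ) (hε0 : 0 < ε) (hε1 : ε < 1/100)
    (V1 V2 V3 : Finset α)
    (h12 : Disjoint V1 V2) (h13 : Disjoint V1 V3) (h23 : Disjoint V2 V3)
    (E : α → α → α → Prop)
    (hyp12 : (1 - 3 * Real.sqrt ε) * ((V1.card : ℝ) * (V2.card : ℝ)) ≤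
      (((V1 ×ˢ V2).filter fun p =>
        ((V3.filter fun z => E p.1 p.2 z).card : ℝ) / (V3.card : ℝ) < ε ∨
        1 - ε < ((V3.filter fun z => E p.1 p.2 z).card : ℝ) / (V3.card : ℝ)).card : ℝ))
    (hyp13 : (1 - 3 * Real.sqrt ε) * ((V1.card : ℝ) * (V3.card : ℝ)) ≤
      (((V1 ×ˢ V3).filter fun p =>
        ((V2.filter fun y => E p.1 y p.2).card : ℝ) / (V2.card : ℝ) < ε ∨
        1 - ε < ((V2.filter fun y => E p.1 y p.2).card : ℝ) / (V2.card : ℝ)).card : ℝ))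
    (hyp23 : (1 - 3 * Real.sqrt ε) * ((V2.card : ℝ) * (V3.card : ℝ)) ≤
      (((V2 ×ˢ V3).filter fun p =>
        ((V1.filter fun x => E x p.1 p.2).card : ℝ) / (V1.card : ℝ) < ε ∨
        1 - ε < ((V1.filter fun x => E x p.1 p.2).card : ℝ) / (V1.card : ℝ)).card : ℝ)) :
    ∃ V1' ⊆ V1, (1 - 2 * Real.sqrt ε) * (V1.card : ℝ) ≤ (V1'.card : ℝ) ∧
      ∀ x ∈ V1',
        (1 - 2 * ε ^ ((1:ℝ)/4)) * ((V2.card : ℝ) * (V3.card : ℝ)) ≤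
            (((V2 ×ˢ V3).filter fun p => E x p.1 p.2).card : ℝ) ∨
        (((V2 ×ˢ V3).filter fun p => E x p.1 p.2).card : ℝ) ≤
            2 * ε ^ ((1:ℝ)/4) * ((V2.card : ℝ) * (V3.card : ℝ)) :=
  stmt_7_general ε hε0 V1 V2 V3 E hyp12 hyp13 hyp23
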